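/- Let H and K be complex Hilbert spaces, M and N closed subspaces of H, and A, B : H → K bounded linear operators. The following are equivalent: (i) there exists a bounded linear operator C : H → K with C x = A x for all x ∈ M and C x = B x for all x ∈ N; (ii) the operator equation (A − B) ∘ P_M = X ∘ (P_{N^⊥} ∘ P_M) has a solution X that is a bounded linear operator from H to K. -/

import Mathlib

/-- The orthogonal projection of a Hilbert space onto a closed subspace,
as a continuous linear operator on the whole space. -/
noncomputable def projCLM {H : Type*} [NormedAddCommGroup H] [InnerProductSpace ℂ H]
    [CompleteSpace H] (W : Submodule ℂ H) (hW : IsClosed (W : Set H)) : H →L[ℂ] H :=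
  haveI : CompleteSpace W := hW.completeSpace_coe
  W.subtypeL.comp (W.orthogonalProjection)

/-!
Write `P_W` for the orthogonal projection onto `W`. An operator composed with `P_M` is determined
by its restriction to `M`, so (ii) says that `A - B` agrees on `M` with `X ∘ P_{N^⊥}` for some `X`.
Given `C` as in (i), `X = C - B` works, because `C - B` vanishes on `N`, hence on its closure
`N^⊥⊥`, hence `(C - B) ∘ P_{N^⊥} = C - B`. Conversely, `C = B + X ∘ P_{N^⊥}` agrees with `B` on `N`
and with `A` on `M`.
-/

open Submodule

section

variable {𝕜 E F : Type*} [RCLike 𝕜] [NormedAddCommGroup E] [InnerProductSpace 𝕜 E]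
  [NormedAddCommGroup F] [NormedSpace 𝕜 F]

theorem ContinuousLinearMap.comp_starProjection_eq_comp_iff (W : Submodule 𝕜 E)
    [W.HasOrthogonalProjection] (S T : E →L[𝕜] F) :
    S.comp W.starProjection = T.comp W.starProjection ↔ ∀ x ∈ W, S x = T x := by
  refine ⟨fun h x hx => ?_, fun h => ?_⟩
  · simpa [starProjection_eq_self_iff.mpr hx] using congr($h x)
  · ext x
    exact h _ (W.starProjection_apply_mem x)

theorem ContinuousLinearMap.comp_starProjection_orthogonal_of_eq_zero [CompleteSpace E]
    (W : Submodule 𝕜 E) (T : E →L[𝕜] F) (hT : ∀ x ∈ W, T x = 0) :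
    T.comp Wᗮ.starProjection = T := by
  have hker : Wᗮᗮ ≤ LinearMap.ker (T : E →ₗ[𝕜] F) := by
    rw [orthogonal_orthogonal_eq_closure]
    exact W.topologicalClosure_minimal hT T.isClosed_ker
  ext x
  have hx : T (x - Wᗮ.starProjection x) = 0 := hker (Wᗮ.sub_starProjection_mem_orthogonal x)
  rw [map_sub, sub_eq_zero] at hx
  exact hx.symm

end

theorem projCLM_eq_starProjection {H : Type*} [NormedAddCommGroup H] [InnerProductSpace ℂ H]
    [CompleteSpace H] (W : Submodule ℂ H) (hW : IsClosed (W : Set H))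
    [W.HasOrthogonalProjection] : projCLM W hW = W.starProjection :=
  rfl

theorem stmt_15_general {H K : Type*} [NormedAddCommGroup H] [InnerProductSpace ℂ H] [CompleteSpace H]
    [NormedAddCommGroup K] [InnerProductSpace ℂ K]
    (M N : Submodule ℂ H) (hM : IsClosed (M : Set H))
    (A B : H →L[ℂ] K) :
    (∃ C : H →L[ℂ] K, (∀ x ∈ M, C x = A x) ∧ (∀ x ∈ N, C x = B x)) ↔
      (∃ X : H →L[ℂ] K,
        (A - B).comp (projCLM M hM) =
          X.comp ((projCLM Nᗮ (Submodule.isClosed_orthogonal N)).comp (projCLM M hM))) := by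
  have : CompleteSpace M := hM.completeSpace_coe
  simp only [projCLM_eq_starProjection, ← ContinuousLinearMap.comp_assoc,
    ContinuousLinearMap.comp_starProjection_eq_comp_iff, ContinuousLinearMap.comp_apply]
  constructor
  · rintro ⟨C, hCA, hCB⟩
    have hCB' : (C - B).comp Nᗮ.starProjection = C - B :=
      (C - B).comp_starProjection_orthogonal_of_eq_zero N fun x hx => sub_eq_zero.mpr (hCB x hx)
    refine ⟨C - B, fun x hx => ?_⟩
    rw [← ContinuousLinearMap.comp_apply, hCB']
    simp [hCA x hx]
  · rintro ⟨X, hX⟩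
    refine ⟨B + X.comp Nᗮ.starProjection, fun x hx => ?_, fun x hx => ?_⟩
    · simp [← hX x hx]
    · simp [starProjection_orthogonal_apply_eq_zero hx]

theorem stmt_15 {H K : Type*} [NormedAddCommGroup H] [InnerProductSpace ℂ H] [CompleteSpace H]
    [NormedAddCommGroup K] [InnerProductSpace ℂ K] [CompleteSpace K]
    (M N : Submodule ℂ H) (hM : IsClosed (M : Set H)) (hN : IsClosed (N : Set H))
    (A B : H →L[ℂ] K) :
    (∃ C : H →L[ℂ] K, (∀ x ∈ M, C x = A x) ∧ (∀ x ∈ N, C x = B x)) ↔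
      (∃ X : H →L[ℂ] K,
        (A - B).comp (projCLM M hM) =
          X.comp ((projCLM Nᗮ (Submodule.isClosed_orthogonal N)).comp (projCLM M hM))) :=
  stmt_15_general M N hM A B
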